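/- Let Γ ⊂ SL₂(ℤ[ω]) be the subgroup generated by A = [[1,1],[0,1]] and B = [[1,0],[-ω,1]]. For every α ∈ ℚ(ω) (the field ℚ(√-3)), there exists a vector (ξ, η) in the Γ-orbit of (1,0) (under multiplication by a unit) with η ≠ 0 and ξ/η = α. In other words, the set of centers ξ/η of orbit spinors with η ≠ 0 is all of ℚ(ω). -/

import Mathlib

/-!
The group `Γ` acts on `ℂ ∪ {∞}` by Möbius transformations, and the centres are the orbit of `∞`.
This orbit is invariant under translation by the lattice `ℤ + ℤ(2 + 4ω)` (by `A` and by the word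
`B A⁻¹ B⁻¹ A² B⁻¹ A⁻¹ B`) and under `β ↦ β / (1 ∓ ωβ)` (by `B^{±1}`), and it contains the four
classes of `ℤ[ω]` modulo that lattice. For `α = z / w ∉ ℤ[ω]` there is a point `c = t ± (1 + ω)`,
with `t` in the lattice, such that `|α - c| < 1`; then `α - t` is the image under `B^{±1}` of a
fraction whose denominator has norm `|α - c|² |w|² < |w|²`, and induction on the norm of the
denominator concludes.
-/

noncomputable def ω : ℂ := -1/2 + (Real.sqrt 3 / 2) * Complex.I

open Complex Matrix
open scoped MatrixGroups

lemma omega_sq : ω ^ 2 = -1 - ω := by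
  have h3 : Real.sqrt 3 ^ 2 = 3 := Real.sq_sqrt (by norm_num)
  apply Complex.ext <;> simp [ω, pow_two] <;> nlinarith [h3]

lemma normSq_add_mul_omega (x y : ℝ) : normSq (x + y * ω) = x ^ 2 - x * y + y ^ 2 := by
  have h3 : Real.sqrt 3 ^ 2 = 3 := Real.sq_sqrt (by norm_num)
  simp [normSq_apply, ω]
  linear_combination (y ^ 2 / 4) * h3

lemma normSq_omega : normSq ω = 1 := by
  simpa using normSq_add_mul_omega 0 1

lemma omega_ne_zero : ω ≠ 0 := fun h => by simpa [h] using normSq_omega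

lemma exists_eq_add_mul_omega (α : ℂ) : ∃ u v : ℝ, α = u + v * ω := by
  have h3 : Real.sqrt 3 ≠ 0 := by positivity
  refine ⟨α.re + α.im / Real.sqrt 3, 2 * α.im / Real.sqrt 3, Complex.ext ?_ ?_⟩
  · simp [ω]; field_simp; ring
  · simp [ω]; field_simp

def eisensteinIntegers : Subring ℂ where
  carrier := {z | ∃ a b : ℤ, z = a + b * ω}
  mul_mem' := by
    rintro _ _ ⟨a, b, rfl⟩ ⟨c, d, rfl⟩
    exact ⟨a * c - b * d, a * d + b * c - b * d, by
      push_cast; linear_combination (b * d : ℂ) * omega_sq⟩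
  one_mem' := ⟨1, 0, by simp⟩
  add_mem' := by
    rintro _ _ ⟨a, b, rfl⟩ ⟨c, d, rfl⟩
    exact ⟨a + c, b + d, by push_cast; ring⟩
  zero_mem' := ⟨0, 0, by simp⟩
  neg_mem' := by
    rintro _ ⟨a, b, rfl⟩
    exact ⟨-a, -b, by push_cast; ring⟩

local notation "𝓔" => eisensteinIntegers

lemma omega_mem_eisensteinIntegers : ω ∈ 𝓔 := ⟨0, 1, by simp⟩

lemma exists_normSq_eq_natCast {z : ℂ} (hz : z ∈ 𝓔) : ∃ n : ℕ, normSq z = n := by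
  obtain ⟨a, b, rfl⟩ := hz
  have h : 0 ≤ a ^ 2 - a * b + b ^ 2 := by nlinarith [sq_nonneg (a - b), sq_nonneg a, sq_nonneg b]
  refine ⟨(a ^ 2 - a * b + b ^ 2).toNat, ?_⟩
  have := normSq_add_mul_omega a b
  push_cast at this
  rw [this]
  exact_mod_cast (Int.toNat_of_nonneg h).symm

/-- The points `a + bω` with `b` odd lie on horizontal lines `√3` apart, with spacing `1` along each
line, so every point is within distance `1` of one of them, with equality only on `ℤ[ω]`. -/
lemma mem_eisensteinIntegers_or_exists_normSq_sub_lt_one (α : ℂ) :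
    α ∈ 𝓔 ∨ ∃ a k : ℤ, normSq (α - (a + (2 * k + 1) * ω)) < 1 := by
  obtain ⟨u, v, rfl⟩ := exists_eq_add_mul_omega α
  set k := round ((v - 1) / 2)
  set q := v - (2 * k + 1)
  set a := round (u - q / 2)
  set p := u - a
  have hq : |q| ≤ 1 := by
    have := abs_sub_round ((v - 1) / 2)
    rw [show q = 2 * ((v - 1) / 2 - k) by simp only [q]; ring, abs_mul]
    norm_num; linarith
  have hp : |p - q / 2| ≤ 1 / 2 := by
    simpa [p, sub_right_comm] using abs_sub_round (u - q / 2)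
  have hnorm : normSq (u + v * ω - (a + (2 * k + 1) * ω)) = p ^ 2 - p * q + q ^ 2 := by
    rw [← normSq_add_mul_omega]; congr 1; simp only [p, q]; push_cast; ring
  by_cases hlt : p ^ 2 - p * q + q ^ 2 < 1
  · exact .inr ⟨a, k, hnorm ▸ hlt⟩
  have hq2 : q ^ 2 = 1 := by
    nlinarith [abs_le.mp hq, sq_abs (p - q / 2), abs_nonneg (p - q / 2)]
  have hpq : p * (p - q) = 0 := by
    nlinarith [abs_le.mp hq, sq_abs (p - q / 2), abs_nonneg (p - q / 2)]
  obtain ⟨m, hm⟩ : ∃ m : ℤ, q = m := by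
    rcases mul_eq_zero.mp (show (q - 1) * (q + 1) = 0 by linear_combination hq2) with h | h
    exacts [⟨1, by push_cast; linarith⟩, ⟨-1, by push_cast; linarith⟩]
  obtain ⟨n, hn⟩ : ∃ n : ℤ, p = n := by
    rcases mul_eq_zero.mp hpq with h | h
    exacts [⟨0, by simpa using h⟩, ⟨m, by linarith⟩]
  refine .inl ⟨a + n, 2 * k + 1 + m, ?_⟩
  have hu : u = a + n := by linarith
  have hv : v = 2 * k + 1 + m := by linarith
  rw [hu, hv]
  push_cast
  ring

def IsCentre (H : Subgroup SL(2, ℂ)) (α : ℂ) : Prop :=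
  ∃ W ∈ H, ∃ ξ η : ℂ, (W : Matrix (Fin 2) (Fin 2) ℂ).mulVec ![1, 0] = ![ξ, η] ∧ η ≠ 0 ∧ ξ / η = α

section IsCentre

variable {H : Subgroup SL(2, ℂ)}

lemma isCentre_iff {α : ℂ} : IsCentre H α ↔ ∃ W ∈ H, W 1 0 ≠ 0 ∧ W 0 0 / W 1 0 = α := by
  have hcol (W : SL(2, ℂ)) :
      (W : Matrix (Fin 2) (Fin 2) ℂ).mulVec ![1, 0] = ![W 0 0, W 1 0] := by
    ext i; fin_cases i <;> simp [mulVec, dotProduct]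
  simp only [IsCentre, hcol]
  constructor
  · rintro ⟨W, hW, ξ, η, hv, hη, rfl⟩
    simp only [Matrix.vecCons_inj] at hv
    exact ⟨W, hW, hv.2.1 ▸ hη, by rw [hv.1, hv.2.1]⟩
  · rintro ⟨W, hW, h, rfl⟩
    exact ⟨W, hW, _, _, rfl, h, rfl⟩

lemma IsCentre.mobius {g : SL(2, ℂ)} (hg : g ∈ H) {ξ η : ℂ} (h : IsCentre H (ξ / η))
    (hη : η ≠ 0) (hne : g 1 0 * ξ + g 1 1 * η ≠ 0) :
    IsCentre H ((g 0 0 * ξ + g 0 1 * η) / (g 1 0 * ξ + g 1 1 * η)) := by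
  obtain ⟨W, hW, hW10, hWα⟩ := isCentre_iff.mp h
  have hW00 : W 0 0 = W 1 0 / η * ξ := by
    rw [div_eq_div_iff hW10 hη] at hWα; field_simp; linear_combination hWα
  have hgW (i : Fin 2) : (g * W) i 0 = W 1 0 / η * (g i 0 * ξ + g i 1 * η) := by
    rw [Matrix.SpecialLinearGroup.coe_mul, mul_apply, Fin.sum_univ_two, hW00]
    field_simp
  refine isCentre_iff.mpr ⟨g * W, mul_mem hg hW, ?_, ?_⟩
  · rw [hgW]; exact mul_ne_zero (div_ne_zero hW10 hη) hne
  · rw [hgW, hgW, mul_div_mul_left _ _ (div_ne_zero hW10 hη)]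

def centreTranslations (H : Subgroup SL(2, ℂ)) : AddSubgroup ℂ where
  carrier := {t | ∀ α, IsCentre H α ↔ IsCentre H (α + t)}
  zero_mem' := by simp
  add_mem' := fun ha hb α => by rw [ha, hb, add_assoc]
  neg_mem' := fun ht α => by rw [ht (α + _), neg_add_cancel_right]

lemma div_mem_centreTranslations {g : SL(2, ℂ)} (hg : g ∈ H) (h10 : g 1 0 = 0)
    (hdiag : g 0 0 = g 1 1) : g 0 1 / g 1 1 ∈ centreTranslations H := by
  have hdet : g 1 1 * g 1 1 = 1 := by
    have := g.2; rw [det_fin_two, h10, hdiag] at this; simpa using this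
  have h11 : g 1 1 ≠ 0 := left_ne_zero_of_mul_eq_one hdet
  intro α
  constructor
  · intro h
    convert (div_one α ▸ h).mobius hg one_ne_zero (by simpa [h10] using h11) using 1
    rw [h10, hdiag, zero_mul, zero_add, mul_one]; field_simp
  · intro h
    convert (div_one (α + _) ▸ h).mobius (inv_mem hg) one_ne_zero
      (by simpa [adjugate_fin_two, h10, hdiag] using h11) using 1
    simp [adjugate_fin_two, h10, hdiag]
    field_simp
    ring

end IsCentre

noncomputable def unipotentUpper (t : ℂ) : SL(2, ℂ) := ⟨!![1, t; 0, 1], by simp [det_fin_two]⟩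

noncomputable def unipotentLower (t : ℂ) : SL(2, ℂ) := ⟨!![1, 0; t, 1], by simp [det_fin_two]⟩

@[simp]
lemma coe_unipotentUpper (t : ℂ) :
    (unipotentUpper t : Matrix (Fin 2) (Fin 2) ℂ) = !![1, t; 0, 1] := rfl

@[simp]
lemma coe_unipotentLower (t : ℂ) :
    (unipotentLower t : Matrix (Fin 2) (Fin 2) ℂ) = !![1, 0; t, 1] := rfl

noncomputable def Γ : Subgroup SL(2, ℂ) := Subgroup.closure {unipotentUpper 1, unipotentLower (-ω)}

lemma unipotentUpper_one_mem : unipotentUpper 1 ∈ Γ := Subgroup.subset_closure (by simp)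

lemma unipotentLower_neg_omega_mem : unipotentLower (-ω) ∈ Γ := Subgroup.subset_closure (by simp)

noncomputable def translationWord : SL(2, ℂ) :=
  unipotentLower (-ω) * (unipotentUpper 1)⁻¹ * (unipotentLower (-ω))⁻¹ * unipotentUpper 1 *
    unipotentUpper 1 * (unipotentLower (-ω))⁻¹ * (unipotentUpper 1)⁻¹ * unipotentLower (-ω)

lemma coe_translationWord :
    (translationWord : Matrix (Fin 2) (Fin 2) ℂ) = !![-1, -(2 + 4 * ω); 0, -1] := by
  simp only [translationWord, Matrix.SpecialLinearGroup.coe_mul,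
    Matrix.SpecialLinearGroup.coe_inv, coe_unipotentUpper, coe_unipotentLower,
    adjugate_fin_two_of, mul_fin_two]
  ext i j
  fin_cases i <;> fin_cases j <;> simp
  · linear_combination (2 - 2 * ω) * omega_sq
  · linear_combination 2 * omega_sq
  · linear_combination 2 * ω ^ 2 * omega_sq
  · linear_combination (2 - 2 * ω) * omega_sq

lemma translationWord_mem : translationWord ∈ Γ := by
  have hA := unipotentUpper_one_mem
  have hB := unipotentLower_neg_omega_mem
  unfold translationWord
  exact mul_mem (mul_mem (mul_mem (mul_mem (mul_mem (mul_mem (mul_mem hB (inv_mem hA))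
    (inv_mem hB)) hA) hA) (inv_mem hB)) (inv_mem hA)) hB

def translationLattice : AddSubgroup ℂ := AddSubgroup.closure {1, 2 + 4 * ω}

lemma one_mem_translationLattice : (1 : ℂ) ∈ translationLattice :=
  AddSubgroup.subset_closure (by simp)

lemma intCast_add_mul_mem_translationLattice (m n : ℤ) :
    (m : ℂ) + n * (2 + 4 * ω) ∈ translationLattice := by
  have h : 2 + 4 * ω ∈ translationLattice := AddSubgroup.subset_closure (by simp)
  simpa only [zsmul_eq_mul, mul_one] using
    add_mem (zsmul_mem one_mem_translationLattice m) (zsmul_mem h n)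

lemma translationLattice_le_eisensteinIntegers :
    translationLattice ≤ (𝓔).toAddSubgroup := by
  rw [translationLattice, AddSubgroup.closure_le]
  rintro _ (rfl | rfl)
  exacts [(𝓔).one_mem, ⟨2, 4, by push_cast; ring⟩]

lemma translationLattice_le_centreTranslations : translationLattice ≤ centreTranslations Γ := by
  rw [translationLattice, AddSubgroup.closure_le]
  rintro _ (rfl | rfl)
  · simpa using div_mem_centreTranslations unipotentUpper_one_mem rfl rfl
  · have h := div_mem_centreTranslations translationWord_mem
    simp only [coe_translationWord] at h
    simpa [div_neg, neg_add] using h rfl rfl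

lemma exists_sub_sign_mul_mem_translationLattice (a k : ℤ) :
    ∃ s : ℂ, (s = 1 ∨ s = -1) ∧ a + (2 * k + 1) * ω - s * (1 + ω) ∈ translationLattice := by
  obtain ⟨n, hk | hk⟩ := Int.even_or_odd' k
  · refine ⟨1, .inl rfl, ?_⟩
    convert intCast_add_mul_mem_translationLattice (a - 1 - 2 * n) n using 1
    push_cast [hk]; ring
  · refine ⟨-1, .inr rfl, ?_⟩
    convert intCast_add_mul_mem_translationLattice (a + 1 - 2 * (n + 1)) (n + 1) using 1
    push_cast [hk]; ring

lemma IsCentre.of_sub_mem_translationLattice {α β : ℂ} (h : IsCentre Γ α)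
    (hβ : β - α ∈ translationLattice) : IsCentre Γ β := by
  simpa using (translationLattice_le_centreTranslations hβ α).mp h

lemma IsCentre.sub_one {α : ℂ} (h : IsCentre Γ α) : IsCentre Γ (α - 1) :=
  h.of_sub_mem_translationLattice (by simpa using neg_mem one_mem_translationLattice)

lemma IsCentre.div_sub_sign_mul_omega_mul {s z w : ℂ} (hs : s = 1 ∨ s = -1)
    (h : IsCentre Γ (z / w)) (hw : w ≠ 0) (hne : w - s * ω * z ≠ 0) :
    IsCentre Γ (z / (w - s * ω * z)) := by
  have hB := unipotentLower_neg_omega_mem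
  rcases hs with rfl | rfl
  · convert h.mobius hB hw (by simpa [sub_eq_neg_add] using hne) using 2 <;> simp; ring
  · convert h.mobius (inv_mem hB) hw (by simpa [adjugate_fin_two, add_comm] using hne)
      using 2 <;> simp [adjugate_fin_two]; ring

lemma isCentre_sign_mul_one_add_omega {s : ℂ} (hs : s = 1 ∨ s = -1) :
    IsCentre Γ (s * (1 + ω)) := by
  have hB := unipotentLower_neg_omega_mem
  have hω : ω * (1 + ω) = -1 := by linear_combination omega_sq
  have hω0 := omega_ne_zero
  rcases hs with rfl | rfl
  · refine isCentre_iff.mpr ⟨_, hB, by simpa using hω0, ?_⟩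
    simp
    field_simp
    linear_combination -hω
  · refine isCentre_iff.mpr ⟨_, inv_mem hB, by simpa [adjugate_fin_two] using hω0, ?_⟩
    simp [adjugate_fin_two]
    field_simp
    linear_combination hω

lemma isCentre_zero : IsCentre Γ 0 := by
  have h₁ : IsCentre Γ (ω / 1) := by
    simpa using (isCentre_sign_mul_one_add_omega (.inl rfl)).sub_one
  have hne : (1 : ℂ) - -1 * ω * ω = -ω := by linear_combination omega_sq
  have h₂ := h₁.div_sub_sign_mul_omega_mul (.inr rfl) one_ne_zero
    (by rw [hne]; exact neg_ne_zero.mpr omega_ne_zero)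
  rw [hne, div_neg, div_self omega_ne_zero] at h₂
  simpa using h₂.of_sub_mem_translationLattice (by simpa using one_mem_translationLattice)

lemma isCentre_two_mul_omega : IsCentre Γ (2 * ω) := by
  have h₁ : IsCentre Γ ((-2 - ω) / 1) := by
    convert (isCentre_sign_mul_one_add_omega (.inr rfl)).sub_one using 1; ring
  have hne : (1 : ℂ) - 1 * ω * (-2 - ω) = ω := by linear_combination omega_sq
  have h₂ := h₁.div_sub_sign_mul_omega_mul (.inl rfl) one_ne_zero
    (by rw [hne]; exact omega_ne_zero)
  convert h₂.sub_one using 1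
  rw [hne, eq_sub_iff_add_eq, eq_div_iff omega_ne_zero]
  linear_combination 2 * omega_sq

lemma isCentre_of_mem_eisensteinIntegers {z : ℂ} (hz : z ∈ 𝓔) : IsCentre Γ z := by
  obtain ⟨a, b, rfl⟩ := hz
  obtain ⟨k, rfl | rfl⟩ := Int.even_or_odd' b
  · obtain ⟨n, rfl | rfl⟩ := Int.even_or_odd' k
    · refine isCentre_zero.of_sub_mem_translationLattice ?_
      convert intCast_add_mul_mem_translationLattice (a - 2 * n) n using 1
      push_cast; ring
    · refine isCentre_two_mul_omega.of_sub_mem_translationLattice ?_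
      convert intCast_add_mul_mem_translationLattice (a - 2 * n) n using 1
      push_cast; ring
  · obtain ⟨s, hs, ht⟩ := exists_sub_sign_mul_mem_translationLattice a k
    exact (isCentre_sign_mul_one_add_omega hs).of_sub_mem_translationLattice
      (by push_cast; exact ht)

lemma add_sign_mul_omega_mul_sub_eq {s z w c : ℂ} (hs : s = 1 ∨ s = -1) (hw : w ≠ 0) :
    w + s * ω * (z - (c - s * (1 + ω)) * w) = s * ω * w * (z / w - c) := by
  have hs2 : s ^ 2 = 1 := by rcases hs with rfl | rfl <;> norm_num
  field_simp
  linear_combination w * s ^ 2 * omega_sq - w * hs2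

lemma isCentre_div {z w : ℂ} (hz : z ∈ 𝓔) (hw : w ∈ 𝓔) (hw0 : w ≠ 0) : IsCentre Γ (z / w) := by
  obtain ⟨n, hn⟩ := exists_normSq_eq_natCast hw
  induction n using Nat.strong_induction_on generalizing z w with
  | _ n ih =>
  by_cases hα : z / w ∈ 𝓔
  · exact isCentre_of_mem_eisensteinIntegers hα
  obtain ⟨a, k, hlt⟩ :=
    (mem_eisensteinIntegers_or_exists_normSq_sub_lt_one (z / w)).resolve_left hα
  obtain ⟨s, hs, ht⟩ := exists_sub_sign_mul_mem_translationLattice a k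
  set c : ℂ := a + (2 * k + 1) * ω
  set t := c - s * (1 + ω)
  have hcE : c ∈ 𝓔 := ⟨a, 2 * k + 1, by push_cast; rfl⟩
  have htE : t ∈ 𝓔 := translationLattice_le_eisensteinIntegers ht
  have hs0 : s ≠ 0 := by rcases hs with rfl | rfl <;> norm_num
  have hsE : s ∈ 𝓔 := by rcases hs with rfl | rfl; exacts [one_mem _, neg_mem (one_mem _)]
  set z' := z - t * w
  set w' := w + s * ω * z'
  have hw' : w' = s * ω * w * (z / w - c) := add_sign_mul_omega_mul_sub_eq hs hw0
  have hw'0 : w' ≠ 0 := by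
    rw [hw']
    exact mul_ne_zero (mul_ne_zero (mul_ne_zero hs0 omega_ne_zero) hw0)
      (sub_ne_zero.mpr fun h => hα (h ▸ hcE))
  have hnorm : normSq w' < n := by
    have hsn : normSq s = 1 := by rcases hs with rfl | rfl <;> simp
    have hn0 : (0 : ℝ) < n := hn ▸ normSq_pos.mpr hw0
    rw [hw', map_mul, map_mul, map_mul, hsn, normSq_omega, hn, one_mul, one_mul]
    nlinarith
  have hz'E : z' ∈ 𝓔 := sub_mem hz (mul_mem htE hw)
  have hw'E : w' ∈ 𝓔 := add_mem hw (mul_mem (mul_mem hsE omega_mem_eisensteinIntegers) hz'E)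
  obtain ⟨m, hm⟩ := exists_normSq_eq_natCast hw'E
  have h₁ : IsCentre Γ (z' / w') := ih m (by exact_mod_cast hm ▸ hnorm) hz'E hw'E hw'0 hm
  have hback : w' - s * ω * z' = w := by simp only [w']; ring
  have h₂ := h₁.div_sub_sign_mul_omega_mul hs hw'0 (hback ▸ hw0)
  rw [hback] at h₂
  refine h₂.of_sub_mem_translationLattice ?_
  convert ht using 1
  simp only [z']
  field_simp
  ring

lemma exists_mem_eisensteinIntegers_div (p q : ℚ) :
    ∃ z ∈ 𝓔, ∃ w ∈ 𝓔, w ≠ 0 ∧ (p : ℂ) + q * ω = z / w := by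
  have hw0 : ((p.den * q.den : ℤ) : ℂ) ≠ 0 := by simp
  refine ⟨(p.num * q.den : ℤ) + (q.num * p.den : ℤ) * ω, ⟨_, _, rfl⟩, (p.den * q.den : ℤ),
    ⟨p.den * q.den, 0, by simp⟩, hw0, ?_⟩
  rw [eq_div_iff hw0]
  have hp : (p.num : ℂ) = p * p.den := by exact_mod_cast (Rat.mul_den_eq_num p).symm
  have hq : (q.num : ℂ) = q * q.den := by exact_mod_cast (Rat.mul_den_eq_num q).symm
  push_cast
  rw [hp, hq]
  ring

theorem orbit_centres_dense (A B : Matrix.SpecialLinearGroup (Fin 2) ℂ)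
    (hA : (A : Matrix (Fin 2) (Fin 2) ℂ) = !![1, 1; 0, 1])
    (hB : (B : Matrix (Fin 2) (Fin 2) ℂ) = !![1, 0; -ω, 1])
    (α : ℂ) (hα : ∃ p q : ℚ, α = (p : ℂ) + (q : ℂ) * ω) :
    ∃ W ∈ Subgroup.closure ({A, B} : Set (Matrix.SpecialLinearGroup (Fin 2) ℂ)),
      ∃ ξ η : ℂ, ((W : Matrix (Fin 2) (Fin 2) ℂ)).mulVec ![1, 0] = ![ξ, η] ∧
        η ≠ 0 ∧ ξ / η = α := by
  obtain ⟨p, q, rfl⟩ := hα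
  obtain ⟨z, hz, w, hw, hw0, hzw⟩ := exists_mem_eisensteinIntegers_div p q
  obtain rfl : A = unipotentUpper 1 := Subtype.ext hA
  obtain rfl : B = unipotentLower (-ω) := Subtype.ext hB
  rw [hzw]
  exact isCentre_div hz hw hw0
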